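/- arXiv:1805.04796 — 2 statements merged into one kernel-verified Lean document; each statement's English description precedes it below -/
import Mathlib

section
/- The Borsuk–Ulam theorem implies Brouwer's fixed-point theorem: assuming that every continuous map S^n → ℝ^n identifies some pair of antipodal points, every continuous map from the closed unit ball B^n to itself has a fixed point. -/
/-!
Write a point of `S^n ⊆ ℝ^{n+1}` as `(y, t)` with `t` its last coordinate, and let
`c = toBall t y = y / max(|t|, ‖y‖) ∈ B^n`, an odd map sending each closed hemisphere onto the
ball. Given `g : B^n → B^n`, the map `G = suMap g`, `G(y, t) = t⁺ g(c) - t⁻ g(-c)`, is odd, so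
`F = y - G` satisfies `F(-x) = F(x)` exactly when `y = G(y, t)`. Borsuk–Ulam supplies such a point;
then `t ≠ 0` (else `y = 0` too), and for `t > 0` we get `y = t g(c)`, hence `‖y‖ ≤ t`, `c = y / t`
and `g(c) = c`; the case `t < 0` is symmetric. The construction is due to F. E. Su.
-/

open Metric

noncomputable section

section SuMap

variable {E : Type*} [NormedAddCommGroup E] [NormedSpace ℝ E]

lemma norm_inv_max_smul_le_one (t : ℝ) (y : E) : ‖(max |t| ‖y‖)⁻¹ • y‖ ≤ 1 := by
  obtain rfl | hy := eq_or_ne y 0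
  · simp
  · have hm : 0 < max |t| ‖y‖ := (norm_pos_iff.mpr hy).trans_le (le_max_right _ _)
    rw [norm_smul, norm_inv, Real.norm_of_nonneg hm.le, inv_mul_le_one₀ hm]
    exact le_max_right _ _

def toBall (t : ℝ) (y : E) : closedBall (0 : E) 1 :=
  ⟨(max |t| ‖y‖)⁻¹ • y, mem_closedBall_zero_iff.mpr (norm_inv_max_smul_le_one t y)⟩

lemma toBall_neg (t : ℝ) (y : E) : toBall (-t) (-y) = -toBall t y :=
  Subtype.ext (by simp [toBall])

lemma coe_toBall_of_norm_le {t : ℝ} {y : E} (h : ‖y‖ ≤ |t|) :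
    (toBall t y : E) = |t|⁻¹ • y := by
  simp [toBall, max_eq_left h]

lemma Continuous.toBall {X : Type*} [TopologicalSpace X] {t : X → ℝ} {y : X → E}
    (ht : Continuous t) (hy : Continuous y) (h : ∀ x, t x ≠ 0 ∨ y x ≠ 0) :
    Continuous fun x => _root_.toBall (t x) (y x) := by
  refine Continuous.subtype_mk ((Continuous.inv₀ (ht.abs.max hy.norm) fun x => ?_).smul hy) _
  rcases h x with h | h
  · exact ((abs_pos.mpr h).trans_le (le_max_left _ _)).ne'
  · exact ((norm_pos_iff.mpr h).trans_le (le_max_right _ _)).ne'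

variable (g : closedBall (0 : E) 1 → closedBall (0 : E) 1)

def suMap (t : ℝ) (y : E) : E :=
  max t 0 • (g (toBall t y) : E) - max (-t) 0 • (g (-toBall t y) : E)

lemma suMap_neg (t : ℝ) (y : E) : suMap g (-t) (-y) = -suMap g t y := by
  simp only [suMap, toBall_neg, neg_neg]
  abel

variable {g} in
lemma Continuous.suMap {X : Type*} [TopologicalSpace X] (hg : Continuous g) {t : X → ℝ}
    {y : X → E} (ht : Continuous t) (hy : Continuous y) (h : ∀ x, t x ≠ 0 ∨ y x ≠ 0) :
    Continuous fun x => _root_.suMap g (t x) (y x) := by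
  have hc := ht.toBall hy h
  exact ((ht.max continuous_const).smul (continuous_subtype_val.comp (hg.comp hc))).sub
    ((ht.neg.max continuous_const).smul (continuous_subtype_val.comp (hg.comp hc.neg)))

lemma apply_toBall_eq_of_pos {t : ℝ} {y : E} (ht : 0 < t) (h : y = suMap g t y) :
    g (toBall t y) = toBall t y := by
  have hy : y = t • (g (toBall t y) : E) := by
    simpa [suMap, ht.le] using h
  have hnorm : ‖y‖ ≤ |t| := by
    rw [hy, norm_smul, Real.norm_eq_abs]
    exact mul_le_of_le_one_right (abs_nonneg t) (mem_closedBall_zero_iff.mp (g _).2)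
  refine Subtype.ext ?_
  rw [coe_toBall_of_norm_le hnorm, abs_of_pos ht]
  conv_rhs => rw [hy]
  rw [inv_smul_smul₀ ht.ne']

lemma exists_fixedPoint_of_eq_suMap {t : ℝ} {y : E} (h : y = suMap g t y)
    (hty : t ≠ 0 ∨ y ≠ 0) : ∃ z, g z = z := by
  rcases lt_trichotomy t 0 with ht | rfl | ht
  · exact ⟨_, apply_toBall_eq_of_pos g (neg_pos.mpr ht) (by rw [suMap_neg, ← h])⟩
  · have hy : y = 0 := by simpa [suMap] using h
    exact absurd hy (hty.resolve_left (by simp))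
  · exact ⟨_, apply_toBall_eq_of_pos g ht h⟩

end SuMap

def initCoords (n : ℕ) : EuclideanSpace ℝ (Fin (n + 1)) →L[ℝ] EuclideanSpace ℝ (Fin n) :=
  LinearMap.toContinuousLinearMap <|
    (WithLp.linearEquiv 2 ℝ (Fin n → ℝ)).symm.toLinearMap ∘ₗ
      LinearMap.funLeft ℝ ℝ Fin.castSucc ∘ₗ (WithLp.linearEquiv 2 ℝ (Fin (n + 1) → ℝ)).toLinearMap

@[simp]
lemma initCoords_apply {n : ℕ} (x : EuclideanSpace ℝ (Fin (n + 1))) (i : Fin n) :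
    initCoords n x i = x i.castSucc :=
  rfl

lemma last_ne_zero_or_initCoords_ne_zero {n : ℕ} {x : EuclideanSpace ℝ (Fin (n + 1))}
    (hx : x ≠ 0) : x (Fin.last n) ≠ 0 ∨ initCoords n x ≠ 0 := by
  contrapose! hx
  ext i
  induction i using Fin.lastCases with
  | last => exact hx.1
  | cast j => simpa using congrArg (· j) hx.2

end

/-- The Borsuk–Ulam theorem implies Brouwer's fixed-point theorem: if every
continuous map `S^n → ℝ^n` identifies some pair of antipodal points, then every
continuous map from the closed unit ball `B^n` to itself has a fixed point. -/
theorem borsuk_ulam_implies_brouwer (n : ℕ)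
    (BU : ∀ f : Metric.sphere (0 : EuclideanSpace ℝ (Fin (n + 1))) 1 →
            EuclideanSpace ℝ (Fin n), Continuous f →
            ∃ x : Metric.sphere (0 : EuclideanSpace ℝ (Fin (n + 1))) 1, f (-x) = f x) :
    ∀ g : Metric.closedBall (0 : EuclideanSpace ℝ (Fin n)) 1 →
          Metric.closedBall (0 : EuclideanSpace ℝ (Fin n)) 1, Continuous g →
      ∃ x : Metric.closedBall (0 : EuclideanSpace ℝ (Fin n)) 1, g x = x := by
  intro g hg
  let t : sphere (0 : EuclideanSpace ℝ (Fin (n + 1))) 1 → ℝ :=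
    fun x => (x : EuclideanSpace ℝ (Fin (n + 1))) (Fin.last n)
  let y : sphere (0 : EuclideanSpace ℝ (Fin (n + 1))) 1 → EuclideanSpace ℝ (Fin n) :=
    fun x => initCoords n x
  have ht : Continuous t :=
    (EuclideanSpace.proj (Fin.last n)).continuous.comp continuous_subtype_val
  have hy : Continuous y := (initCoords n).continuous.comp continuous_subtype_val
  have hty (x) : t x ≠ 0 ∨ y x ≠ 0 :=
    last_ne_zero_or_initCoords_ne_zero (ne_zero_of_mem_unit_sphere x)
  obtain ⟨x, hx⟩ := BU (fun x => y x - suMap g (t x) (y x)) (hy.sub (hg.suMap ht hy hty))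
  have ht_neg : t (-x) = -t x := rfl
  have hy_neg : y (-x) = -y x := by simp [y, coe_neg_sphere]
  rw [ht_neg, hy_neg, suMap_neg] at hx
  have hfix : y x = suMap g (t x) (y x) := by
    linear_combination (norm := module) (-1 / 2 : ℝ) • hx
  exact exists_fixedPoint_of_eq_suMap g hfix (hty x)
end

section
/- The 2-rank of the special orthogonal group SO(n) equals n − 1. -/
/-- The 2-rank of a group `G`: the largest `h` such that `G` contains a
subgroup isomorphic to the elementary abelian 2-group `(ℤ/2)^h`. -/
noncomputable def twoRank (G : Type*) [Group G] : ℕ :=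
  sSup {h : ℕ | ∃ H : Subgroup G, Nonempty (H ≃* (Fin h → Multiplicative (ZMod 2)))}

/-- The special orthogonal group `SO(n)`: the subgroup of the orthogonal group
consisting of matrices of determinant one. -/
def SO (n : ℕ) : Subgroup (Matrix.orthogonalGroup (Fin n) ℝ) where
  carrier := {A | (A : Matrix (Fin n) (Fin n) ℝ).det = 1}
  one_mem' := by simp
  mul_mem' := by
    intro a b ha hb
    simp only [Set.mem_setOf_eq, Matrix.UnitaryGroup.mul_val, Matrix.det_mul] at *
    rw [ha, hb, mul_one]
  inv_mem' := by
    intro a ha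
    simp only [Set.mem_setOf_eq, Matrix.UnitaryGroup.inv_val, Matrix.star_eq_conjTranspose,
      Matrix.det_conjTranspose] at *
    simpa using ha
  

/-! Every element of an elementary abelian 2-subgroup of `SO(n)` is a symmetric orthogonal
involution, and these commute, so they are simultaneously diagonalisable in one basis with
diagonal entries `±1` whose product is the determinant `1`. Such a diagonal is determined by its
last `n - 1` entries, hence the subgroup has order at most `2 ^ (n - 1)`. Conversely, the diagonal
sign matrices of determinant `1` form a copy of `(ℤ/2)^(n - 1)` in `SO(n)`. -/

open Module Matrix
open scoped Function

theorem LinearMap.IsSymmetric.exists_basis_apply_eq_smul_of_commute {𝕜 E ι : Type*} [RCLike 𝕜]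
    [NormedAddCommGroup E] [InnerProductSpace 𝕜 E] [FiniteDimensional 𝕜 E]
    {T : ι → Module.End 𝕜 E} (hT : ∀ i, (T i).IsSymmetric) (hC : Pairwise (Commute on T))
    {n : ℕ} (hn : finrank 𝕜 E = n) :
    ∃ (b : Basis (Fin n) 𝕜 E) (μ : ι → Fin n → 𝕜), ∀ i k, T i (b k) = μ i k • b k := by
  classical
  have hint := directSum_isInternal_of_pairwise_commute hT hC
  let b := hint.collectedBasis fun χ => finBasis 𝕜 ↥(⨅ j, End.eigenspace (T j) (χ j))
  let e := b.indexEquiv (finBasisOfFinrankEq 𝕜 E hn)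
  refine ⟨b.reindex e, fun i k => (e.symm k).1 i, fun i k => ?_⟩
  rw [Basis.reindex_apply]
  exact Module.End.mem_eigenspace_iff.mp
    ((Submodule.mem_iInf _).mp (hint.collectedBasis_mem _ (e.symm k)) i)

theorem LinearMap.eq_toLin_diagonal_of_apply_eq_smul {R M ι : Type*} [CommSemiring R]
    [AddCommMonoid M] [Module R M] [Fintype ι] [DecidableEq ι] (b : Basis ι R M)
    {f : Module.End R M} {μ : ι → R} (h : ∀ i, f (b i) = μ i • b i) :
    f = toLin b b (diagonal μ) :=
  b.ext fun i => by
    simp [h, toLin_self, diagonal_apply]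

theorem Matrix.IsHermitian.of_mem_unitaryGroup_of_mul_self_eq_one {n α : Type*} [Fintype n]
    [DecidableEq n] [CommRing α] [StarRing α] {A : Matrix n n α}
    (hA : A ∈ unitaryGroup n α) (hAA : A * A = 1) : A.IsHermitian :=
  calc Aᴴ = Aᴴ * A * A := by rw [Matrix.mul_assoc, hAA, Matrix.mul_one]
    _ = A := by rw [← star_eq_conjTranspose, mem_unitaryGroup_iff'.mp hA, Matrix.one_mul]

theorem natCard_le_two_pow_of_injective_of_prod_eq_one {G : Type*} {m : ℕ}
    (μ : G → Fin (m + 1) → ℝ) (hμ : Function.Injective μ) (hsign : ∀ g k, μ g k = 1 ∨ μ g k = -1)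
    (hprod : ∀ g, ∏ k, μ g k = 1) : Nat.card G ≤ 2 ^ m := by
  have eq_of_iff : ∀ x y : ℝ, (x = 1 ∨ x = -1) → (y = 1 ∨ y = -1) → (x = 1 ↔ y = 1) → x = y := by
    rintro x y (rfl | rfl) (rfl | rfl) h <;> first | rfl | norm_num at h
  let code : G → Fin m → Bool := fun g k => decide (μ g k.succ = 1)
  have hcode : Function.Injective code := by
    intro g g' hgg'
    have htail : ∀ k : Fin m, μ g k.succ = μ g' k.succ := fun k =>
      eq_of_iff _ _ (hsign g k.succ) (hsign g' k.succ) (decide_eq_decide.mp (congrFun hgg' k))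
    have hhead : μ g 0 = μ g' 0 := by
      have := (hprod g).trans (hprod g').symm
      rw [Fin.prod_univ_succ, Fin.prod_univ_succ, Finset.prod_congr rfl fun k _ => htail k] at this
      refine mul_right_cancel₀ (Finset.prod_ne_zero_iff.mpr fun k _ => ?_) this
      rcases hsign g' k.succ with h | h <;> simp [h]
    exact hμ (funext (Fin.cases hhead htail))
  calc Nat.card G ≤ Nat.card (Fin m → Bool) := Nat.card_le_card_of_injective code hcode
    _ = 2 ^ m := by simp

theorem Matrix.natCard_le_two_pow_of_commute_of_mul_self_eq_one {G : Type*} {n : ℕ}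
    (f : G → Matrix (Fin n) (Fin n) ℝ) (hf : Function.Injective f)
    (hherm : ∀ g, (f g).IsHermitian) (hinv : ∀ g, f g * f g = 1) (hdet : ∀ g, (f g).det = 1)
    (hcomm : ∀ g g', Commute (f g) (f g')) : Nat.card G ≤ 2 ^ (n - 1) := by
  obtain _ | m := n
  · have : Subsingleton G := hf.subsingleton
    exact Finite.card_le_one_iff_subsingleton.mpr this
  let T : G → Module.End ℝ (EuclideanSpace ℝ (Fin (m + 1))) := fun g => toLpLinAlgEquiv 2 (f g)
  obtain ⟨b, μ, hμ⟩ := LinearMap.IsSymmetric.exists_basis_apply_eq_smul_of_commute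
    (T := T) (fun g => isSymmetric_toEuclideanLin_iff.mpr (hherm g))
    (fun g g' _ => (hcomm g g').map (toLpLinAlgEquiv 2)) finrank_euclideanSpace_fin
  have hT : ∀ g, T g = toLin b b (diagonal (μ g)) :=
    fun g => LinearMap.eq_toLin_diagonal_of_apply_eq_smul b (hμ g)
  refine natCard_le_two_pow_of_injective_of_prod_eq_one μ (fun g g' h => ?_) (fun g k => ?_)
    (fun g => ?_)
  · exact hf ((toLpLinAlgEquiv 2).injective (show T g = T g' by rw [hT, hT, h]))
  · have : (μ g k * μ g k) • b k = (1 : ℝ) • b k := by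
      rw [← smul_smul, ← hμ, ← map_smul, ← hμ, one_smul, ← Module.End.mul_apply, ← map_mul,
        hinv, map_one, Module.End.one_apply]
    exact mul_self_eq_one_iff.mp (smul_left_injective ℝ (b.ne_zero k) this)
  · rw [← det_diagonal, ← LinearMap.det_toLin b, ← hT, ← hdet g]
    exact LinearMap.det_toLpLin 2 (f g)

def zmodTwoSignHom : Multiplicative (ZMod 2) →* ℤˣ where
  toFun x := (-1) ^ x.toAdd
  map_one' := uzpow_zero _
  map_mul' _ _ := uzpow_add _ _ _

theorem zmodTwoSignHom_injective : Function.Injective zmodTwoSignHom := by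
  decide

def Matrix.diagonalUnitsHom (ι : Type*) [Fintype ι] [DecidableEq ι] :
    (ι → ℤˣ) →* orthogonalGroup ι ℝ where
  toFun d := ⟨diagonal fun i => ((d i : ℤ) : ℝ), by
    rw [mem_unitaryGroup_iff', star_eq_conjTranspose, diagonal_conjTranspose,
      diagonal_mul_diagonal]
    simp [← Int.cast_mul]⟩
  map_one' := by ext : 1; simp
  map_mul' d d' := by ext : 1; simp [diagonal_mul_diagonal]

theorem Matrix.diagonalUnitsHom_injective (ι : Type*) [Fintype ι] [DecidableEq ι] :
    Function.Injective (diagonalUnitsHom ι) := by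
  intro d d' h
  funext i
  have := congrFun (congrFun (congrArg Subtype.val h) i) i
  simpa [diagonalUnitsHom, Units.ext_iff] using this

theorem Matrix.det_diagonalUnitsHom {ι : Type*} [Fintype ι] [DecidableEq ι] (d : ι → ℤˣ) :
    (diagonalUnitsHom ι d : Matrix ι ι ℝ).det = ((∏ i, d i : ℤˣ) : ℤ) := by
  simp [diagonalUnitsHom]

def signVector (m : ℕ) : (Fin m → Multiplicative (ZMod 2)) →* (Fin (m + 1) → ℤˣ) where
  toFun x := Fin.cons (∏ j, zmodTwoSignHom (x j)) fun j => zmodTwoSignHom (x j)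
  map_one' := by ext i : 1; cases i using Fin.cases <;> simp
  map_mul' x y := by
    ext i : 1; cases i using Fin.cases <;> simp [Finset.prod_mul_distrib]

theorem prod_signVector {m : ℕ} (x : Fin m → Multiplicative (ZMod 2)) :
    ∏ i, signVector m x i = 1 := by
  simp [signVector, Fin.prod_univ_succ, Int.units_mul_self]

theorem signVector_injective (m : ℕ) : Function.Injective (signVector m) := by
  intro x y h
  funext j
  exact zmodTwoSignHom_injective (by simpa [signVector] using congrFun h j.succ)

def signEmbedding (m : ℕ) : (Fin m → Multiplicative (ZMod 2)) →* SO (m + 1) :=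
  ((diagonalUnitsHom _).comp (signVector m)).codRestrict (SO (m + 1)) fun x => by
    show (diagonalUnitsHom (Fin (m + 1)) (signVector m x)).1.det = 1
    simp [det_diagonalUnitsHom, prod_signVector]

theorem signEmbedding_injective (m : ℕ) : Function.Injective (signEmbedding m) := by
  intro x y h
  exact signVector_injective m (diagonalUnitsHom_injective _ (congrArg Subtype.val h))

theorem le_pred_of_mulEquiv_subgroup_SO {n k : ℕ} (H : Subgroup (SO n))
    (e : H ≃* (Fin k → Multiplicative (ZMod 2))) : k ≤ n - 1 := by
  let f : H → Matrix (Fin n) (Fin n) ℝ := fun g => ((g : SO n) : orthogonalGroup (Fin n) ℝ)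
  have hf : Function.Injective f :=
    Subtype.val_injective.comp (Subtype.val_injective.comp Subtype.val_injective)
  have hmul : ∀ g g', f (g * g') = f g * f g' := fun _ _ => rfl
  have hsq : ∀ g, f g * f g = 1 := fun g => by
    have : g * g = 1 := e.injective <| by
      rw [map_mul, map_one]
      exact funext fun i => CharTwo.add_self_eq_zero (e g i).toAdd
    rw [← hmul, this]
    rfl
  have hcomm : ∀ g g', Commute (f g) (f g') := fun g g' => by
    have : g * g' = g' * g := e.injective (by rw [map_mul, map_mul, mul_comm])
    rw [Commute, SemiconjBy, ← hmul, ← hmul, this]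
  have hcard : Nat.card H = 2 ^ k := by
    rw [Nat.card_congr e.toEquiv]
    simp
  rw [← Nat.pow_le_pow_iff_right (by norm_num : 1 < 2), ← hcard]
  exact natCard_le_two_pow_of_commute_of_mul_self_eq_one f hf
    (fun g => .of_mem_unitaryGroup_of_mul_self_eq_one (g : SO n).1.2 (hsq g)) hsq
    (fun g => (g : SO n).2) hcomm

theorem exists_subgroup_SO_mulEquiv (n : ℕ) :
    ∃ H : Subgroup (SO n), Nonempty (H ≃* (Fin (n - 1) → Multiplicative (ZMod 2))) := by
  obtain _ | m := n
  · exact ⟨⊥, ⟨MulEquiv.ofUnique (N := Fin 0 → Multiplicative (ZMod 2))⟩⟩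
  · exact ⟨(signEmbedding m).range, ⟨(MonoidHom.ofInjective (signEmbedding_injective m)).symm⟩⟩

/-- The 2-rank of the special orthogonal group `SO(n)` equals `n - 1`. -/
theorem twoRank_SO (n : ℕ) : twoRank (SO n) = n - 1 :=
  IsGreatest.csSup_eq ⟨exists_subgroup_SO_mulEquiv n,
    fun _ ⟨H, ⟨e⟩⟩ => le_pred_of_mulEquiv_subgroup_SO H e⟩
end
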